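/- arXiv:1207.7203 — 4 statements merged into one kernel-verified Lean document; each statement's English description precedes it below -/
import Mathlib

section
/- For σ > 0, z > 0 and s > 0, the convolution identity holds: (1/Γ(σ)) ∫₀^s (s-t)^{σ-1} · (z^{2σ}/(4^σ Γ(σ))) · e^{-z²/(4t)} / t^{1+σ} dt = (1/Γ(σ)) · e^{-z²/(4s)} / s^{1-σ}. -/
open Real MeasureTheory Set

/-!
Substitute `t = (s⁻¹ + u)⁻¹`, which maps `(0, ∞)` onto `(0, s)` with Jacobian `t²`. Since
`s - t = t · s u` and `z² / (4t) = z² / (4s) + z² u / 4`, the powers of `t` cancel and the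
integrand becomes `s^(σ-1) e^(-z²/(4s))` times the Gamma density `u^(σ-1) e^(-z² u / 4)`, whose
integral `4^σ Γ(σ) / z^(2σ)` is exactly the reciprocal of the normalising constant of `b^{σ,z}`.
-/

theorem image_inv_const_add_Ioi_zero {s : ℝ} (hs : 0 < s) :
    (fun u : ℝ => (s⁻¹ + u)⁻¹) '' Ioi 0 = Ioo 0 s := by
  rw [show (fun u : ℝ => (s⁻¹ + u)⁻¹) = Inv.inv ∘ (s⁻¹ + ·) from rfl, image_comp,
    image_const_add_Ioi, add_zero, image_inv_eq_inv, inv_Ioi₀ (inv_pos.2 hs), inv_inv]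

theorem integral_Ioo_zero_eq_integral_Ioi_inv_const_add {E : Type*} [NormedAddCommGroup E]
    [NormedSpace ℝ E] {s : ℝ} (hs : 0 < s) (g : ℝ → E) :
    ∫ t in Ioo 0 s, g t = ∫ u in Ioi 0, ((s⁻¹ + u)⁻¹) ^ 2 • g (s⁻¹ + u)⁻¹ := by
  have hderiv (u : ℝ) (hu : u ∈ Ioi 0) :
      HasDerivWithinAt (fun u => (s⁻¹ + u)⁻¹) (-1 / (s⁻¹ + u) ^ 2) (Ioi 0) u := by
    have hne : s⁻¹ + u ≠ 0 := by have : (0:ℝ) < u := hu; positivity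
    exact (((hasDerivAt_id' u).const_add s⁻¹).inv hne).hasDerivWithinAt
  have hinj : InjOn (fun u : ℝ => (s⁻¹ + u)⁻¹) (Ioi 0) := fun u _ v _ h => by simpa using h
  rw [← image_inv_const_add_Ioi_zero hs,
    integral_image_eq_integral_abs_deriv_smul measurableSet_Ioi hderiv hinj]
  refine setIntegral_congr_fun measurableSet_Ioi fun u (hu : 0 < u) => ?_
  rw [neg_div, abs_neg, abs_of_pos (by positivity), one_div, inv_pow]

theorem sq_mul_rpow_sub_mul_exp_div_rpow_eq {s u t σ C z : ℝ} (hs : 0 < s) (hu : 0 < u)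
    (ht : 0 < t) (htsu : t⁻¹ = s⁻¹ + u) :
    t ^ 2 * ((s - t) ^ (σ - 1) * (C * exp (-z ^ 2 / (4 * t)) / t ^ (1 + σ))) =
      C * s ^ (σ - 1) * exp (-z ^ 2 / (4 * s)) * (u ^ (σ - 1) * exp (-(z ^ 2 / 4 * u))) := by
  have hsub : s - t = t * (s * u) := by
    field_simp at htsu
    linear_combination htsu
  have hexp : -z ^ 2 / (4 * t) = -z ^ 2 / (4 * s) + -(z ^ 2 / 4 * u) := by
    rw [div_mul_eq_div_div_swap, div_eq_mul_inv _ t, htsu]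
    ring
  have hpow : t ^ 2 * t ^ (σ - 1) / t ^ (1 + σ) = 1 := by
    rw [← rpow_natCast, ← rpow_add ht, ← rpow_sub ht, Nat.cast_ofNat,
      show (2 : ℝ) + (σ - 1) - (1 + σ) = 0 by ring, rpow_zero]
  rw [hsub, hexp, exp_add, mul_rpow ht.le (by positivity), mul_rpow hs.le hu.le]
  linear_combination
    (C * s ^ (σ - 1) * u ^ (σ - 1) * exp (-z ^ 2 / (4 * s)) * exp (-(z ^ 2 / 4 * u))) * hpow

theorem integral_rpow_sub_one_mul_exp_neg_sq_div_four_mul {σ z : ℝ} (hσ : 0 < σ) (hz : 0 < z) :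
    ∫ u in Ioi 0, u ^ (σ - 1) * exp (-(z ^ 2 / 4 * u)) = 4 ^ σ * Gamma σ / z ^ (2 * σ) := by
  rw [integral_rpow_mul_exp_neg_mul_Ioi hσ (by positivity), one_div_div,
    div_rpow (by norm_num) (by positivity), rpow_mul hz.le, rpow_two, div_mul_eq_mul_div]

theorem convolution_identity (σ z s : ℝ) (hσ : 0 < σ) (hz : 0 < z) (hs : 0 < s) :
    (1 / Real.Gamma σ) *
      ∫ t in Ioo (0:ℝ) s,
        (s - t) ^ (σ - 1) *
          (z ^ (2 * σ) / (4 ^ σ * Real.Gamma σ) * Real.exp (-z ^ 2 / (4 * t)) / t ^ (1 + σ)) =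
    (1 / Real.Gamma σ) * Real.exp (-z ^ 2 / (4 * s)) / s ^ (1 - σ) := by
  have hΓ : 0 < Gamma σ := Gamma_pos_of_pos hσ
  simp only [integral_Ioo_zero_eq_integral_Ioi_inv_const_add hs, smul_eq_mul]
  rw [setIntegral_congr_fun measurableSet_Ioi fun u (hu : 0 < u) =>
      sq_mul_rpow_sub_mul_exp_div_rpow_eq hs hu (by positivity) (inv_inv _),
    integral_const_mul, integral_rpow_sub_one_mul_exp_neg_sq_div_four_mul hσ hz,
    rpow_sub hs, rpow_sub hs, rpow_one]
  field_simp
end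

section
/- For 0 < σ < 1, (1/Γ(σ)) ∫₀^∞ t^{σ-1} (e^{-1/t} - 1) dt = Γ(-σ)/Γ(σ), where Γ(-σ) is interpreted via the functional equation Γ(-σ) = -Γ(1-σ)/σ. -/
open Real MeasureTheory Set Filter Topology

/-!
Substituting `t = 1 / y` turns the integral into `∫₀^∞ y^(-σ-1) (e^(-y) - 1) dy`. Integrating by
parts against `(y^(-σ))' = -σ y^(-σ-1)` leaves `-(1/σ) ∫₀^∞ e^(-y) y^(-σ) dy = -Γ(1-σ)/σ`; the
boundary terms vanish since `e^(-y) - 1 = O(y)` at `0` and `σ > 0`.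
-/

theorem integral_Ioi_rpow_smul_comp_inv {E : Type*} [NormedAddCommGroup E] [NormedSpace ℝ E]
    (g : ℝ → E) (s : ℝ) :
    ∫ t in Ioi (0:ℝ), t ^ (s - 1) • g t⁻¹ = ∫ y in Ioi (0:ℝ), y ^ (-s - 1) • g y := by
  rw [← integral_comp_rpow_Ioi (fun y => y ^ (-s - 1) • g y) (p := -1) (by norm_num)]
  refine setIntegral_congr_fun measurableSet_Ioi fun t (ht : 0 < t) => ?_
  have hpow : |(-1:ℝ)| * t ^ ((-1:ℝ) - 1) * t⁻¹ ^ (-s - 1) = t ^ (s - 1) := by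
    rw [abs_neg, abs_one, one_mul, ← rpow_neg_one, ← rpow_mul ht.le, ← rpow_add ht]
    ring_nf
  rw [rpow_neg_one, smul_smul, hpow]

theorem abs_exp_neg_sub_one {y : ℝ} (hy : 0 ≤ y) : |exp (-y) - 1| = 1 - exp (-y) := by
  rw [abs_sub_comm, abs_of_nonneg (by simpa using hy)]

theorem integrableOn_exp_neg_sub_one_mul_rpow {s : ℝ} (hs0 : 0 < s) (hs1 : s < 1) :
    IntegrableOn (fun y => (exp (-y) - 1) * y ^ (-s - 1)) (Ioi 0) := by
  have hcont : ContinuousOn (fun y => (exp (-y) - 1) * y ^ (-s - 1)) (Ioi 0) :=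
    (by fun_prop : Continuous fun y => exp (-y) - 1).continuousOn.mul
      (continuousOn_id.rpow_const fun y hy => Or.inl (ne_of_gt hy))
  have hnorm : ∀ y, 0 < y → ‖(exp (-y) - 1) * y ^ (-s - 1)‖ = (1 - exp (-y)) * y ^ (-s - 1) :=
    fun y hy => by
      rw [norm_mul, norm_eq_abs, abs_exp_neg_sub_one hy.le, norm_of_nonneg (by positivity)]
  have hnear : IntegrableOn (fun y => (exp (-y) - 1) * y ^ (-s - 1)) (Ioc 0 1) := by
    refine ((intervalIntegral.intervalIntegrable_rpow' (r := -s) (by linarith)).1).mono'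
      ((hcont.mono Ioc_subset_Ioi_self).aestronglyMeasurable measurableSet_Ioc) ?_
    filter_upwards [ae_restrict_mem measurableSet_Ioc] with y hy
    rw [hnorm y hy.1, rpow_sub_one hy.1.ne', mul_div_left_comm]
    refine mul_le_of_le_one_right (rpow_nonneg hy.1.le _) ?_
    rw [div_le_one hy.1]
    linarith [add_one_le_exp (-y)]
  have hfar : IntegrableOn (fun y => (exp (-y) - 1) * y ^ (-s - 1)) (Ioi 1) := by
    refine (integrableOn_Ioi_rpow_of_lt (a := -s - 1) (by linarith) one_pos).mono'
      ((hcont.mono (Ioi_subset_Ioi zero_le_one)).aestronglyMeasurable measurableSet_Ioi) ?_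
    filter_upwards [ae_restrict_mem measurableSet_Ioi] with y (hy : 1 < y)
    rw [hnorm y (by linarith)]
    exact mul_le_of_le_one_left (by positivity) (by linarith [exp_pos (-y)])
  rw [← Ioc_union_Ioi_eq_Ioi zero_le_one]
  exact hnear.union hfar

theorem tendsto_exp_neg_sub_one_mul_rpow_nhdsGT_zero {s : ℝ} (hs1 : s < 1) :
    Tendsto (fun y => (exp (-y) - 1) * y ^ (-s)) (𝓝[>] 0) (𝓝 0) := by
  have hbound : Tendsto (fun y : ℝ => y ^ (1 - s)) (𝓝[>] 0) (𝓝 0) := by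
    simpa [zero_rpow (by linarith : 1 - s ≠ 0)] using
      ((continuousAt_rpow_const 0 (1 - s) (Or.inr (by linarith))).tendsto).mono_left
        nhdsWithin_le_nhds
  refine squeeze_zero_norm' ?_ hbound
  filter_upwards [self_mem_nhdsWithin] with y (hy : 0 < y)
  rw [norm_mul, norm_eq_abs, abs_exp_neg_sub_one hy.le, norm_of_nonneg (by positivity),
    sub_eq_add_neg 1 s, rpow_add hy, rpow_one]
  gcongr
  linarith [add_one_le_exp (-y)]

theorem integral_rpow_mul_exp_neg_sub_one {s : ℝ} (hs0 : 0 < s) (hs1 : s < 1) :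
    ∫ y in Ioi (0:ℝ), y ^ (-s - 1) * (exp (-y) - 1) = -Gamma (1 - s) / s := by
  have huv' : IntegrableOn (fun y => (exp (-y) - 1) * (-s * y ^ (-s - 1))) (Ioi 0) := by
    have h := (integrableOn_exp_neg_sub_one_mul_rpow hs0 hs1).const_mul (-s)
    simp only [mul_left_comm (-s)] at h
    exact h
  have hu'v : IntegrableOn (fun y => -exp (-y) * y ^ (-s)) (Ioi 0) := by
    simpa [neg_mul, sub_sub_cancel_left] using
      (GammaIntegral_convergent (by linarith : 0 < 1 - s)).neg
  have hinfty : Tendsto (fun y => (exp (-y) - 1) * y ^ (-s)) atTop (𝓝 0) := by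
    have := ((tendsto_exp_atBot.comp tendsto_neg_atTop_atBot).sub_const 1).mul
      (tendsto_rpow_neg_atTop hs0)
    simpa using this
  have ibp := integral_Ioi_mul_deriv_eq_deriv_mul (a := 0) (a' := 0) (b' := 0)
    (u := fun y => exp (-y) - 1) (u' := fun y => -exp (-y))
    (v := fun y => y ^ (-s)) (v' := fun y => -s * y ^ (-s - 1))
    (fun y _ => by simpa using ((hasDerivAt_neg y).exp).sub_const 1)
    (fun y hy => hasDerivAt_rpow_const (Or.inl (ne_of_gt hy)))
    huv' hu'v (tendsto_exp_neg_sub_one_mul_rpow_nhdsGT_zero hs1) hinfty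
  have hΓ : ∫ y in Ioi (0:ℝ), exp (-y) * y ^ (-s) = Gamma (1 - s) := by
    rw [Gamma_eq_integral (by linarith), sub_sub_cancel_left]
  calc ∫ y in Ioi (0:ℝ), y ^ (-s - 1) * (exp (-y) - 1)
      = (-s)⁻¹ * ∫ y in Ioi (0:ℝ), (exp (-y) - 1) * (-s * y ^ (-s - 1)) := by
        rw [← integral_const_mul]
        congr 1; ext y; field_simp
    _ = -Gamma (1 - s) / s := by
        rw [ibp]
        simp only [neg_mul, integral_neg, hΓ]
        ring

theorem integral_rpow_exp_sub_one (σ : ℝ) (hσ0 : 0 < σ) (hσ1 : σ < 1) :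
    (1 / Real.Gamma σ) * ∫ t in Ioi (0:ℝ), t ^ (σ - 1) * (Real.exp (-1 / t) - 1) =
      (-Real.Gamma (1 - σ) / σ) / Real.Gamma σ := by
  have hsubst := integral_Ioi_rpow_smul_comp_inv (fun y => exp (-y) - 1) σ
  simp only [smul_eq_mul, inv_eq_one_div] at hsubst
  simp only [neg_div _ (1 : ℝ)]
  rw [hsubst, integral_rpow_mul_exp_neg_sub_one hσ0 hσ1, one_div_mul_eq_div]
end

section
/- Let (T(t))_{t≥0} be a uniformly bounded C₀-semigroup on a Banach space X with generator A, 0 < σ < 1, and f ∈ X. Define u(y) = (y^{2σ}/(4^σ Γ(σ))) ∫₀^∞ e^{-y²/(4t)} t^{-1-σ} T(t)f dt for y > 0. Then sup_{y>0} ‖u(y)‖ ≤ C ‖f‖ for a constant C depending only on the semigroup bound, and u(y) → f in X as y → 0⁺. -/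
/-!
The kernel `b^{σ,y}` is a probability density on `(0, ∞)`: substituting `t = 1/x` turns its
integral into a Gamma integral. Hence `u(y)` is an average of the orbit `t ↦ T(t) f`, which gives
`‖u(y)‖ ≤ M ‖f‖`. On `(δ, ∞)` the kernel is at most a constant times `y^{2σ} t^{-1-σ}`, so its mass
there vanishes as `y → 0`; an average against such a concentrating family tends to the value at
`t = 0` of any bounded function continuous there, and `T(0) f = f`.
-/

open Real MeasureTheory Set Filter Topology

section ApproximateIdentity

variable {α ι E : Type*} [MeasurableSpace α] {μ : Measure α} [NormedAddCommGroup E]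
  [NormedSpace ℝ E] {s : Set α}

theorem norm_setIntegral_smul_le_of_setIntegral_eq_one {φ : α → ℝ} {g : α → E} {B : ℝ}
    (hs : MeasurableSet s) (hφ_nonneg : ∀ x ∈ s, 0 ≤ φ x) (hφ_one : ∫ x in s, φ x ∂μ = 1)
    (hg : ∀ x ∈ s, ‖g x‖ ≤ B) :
    ‖∫ x in s, φ x • g x ∂μ‖ ≤ B := by
  have hφ : IntegrableOn φ s μ := .of_integral_ne_zero (by simp [hφ_one])
  calc ‖∫ x in s, φ x • g x ∂μ‖ ≤ ∫ x in s, φ x * B ∂μ := by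
        refine norm_integral_le_of_norm_le (hφ.mul_const B) ?_
        filter_upwards [ae_restrict_mem hs] with x hx
        rw [norm_smul, Real.norm_of_nonneg (hφ_nonneg x hx)]
        exact mul_le_mul_of_nonneg_left (hg x hx) (hφ_nonneg x hx)
    _ = B := by rw [integral_mul_const, hφ_one, one_mul]

theorem tendsto_setIntegral_smul_of_tendsto_setIntegral_diff [TopologicalSpace α]
    [OpensMeasurableSpace α] [CompleteSpace E] {l : Filter ι} {x₀ : α} {φ : ι → α → ℝ}
    {g : α → E} {a : E} {B : ℝ} (hs : MeasurableSet s)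
    (hφ_nonneg : ∀ᶠ i in l, ∀ x ∈ s, 0 ≤ φ i x)
    (hφ_one : ∀ᶠ i in l, ∫ x in s, φ i x ∂μ = 1)
    (hφ_tail : ∀ u, IsOpen u → x₀ ∈ u → Tendsto (fun i => ∫ x in s \ u, φ i x ∂μ) l (𝓝 0))
    (hgm : AEStronglyMeasurable g (μ.restrict s)) (hgB : ∀ x ∈ s, ‖g x‖ ≤ B)
    (hga : Tendsto g (𝓝[s] x₀) (𝓝 a)) :
    Tendsto (fun i => ∫ x in s, φ i x • g x ∂μ) l (𝓝 a) := by
  rw [Metric.tendsto_nhds]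
  intro ε hε
  obtain ⟨u, hu_open, hx₀u, hu⟩ :=
    mem_nhdsWithin.mp (Metric.tendsto_nhds.mp hga (ε / 2) (half_pos hε))
  set C := B + ‖a‖
  have hsmall : ∀ᶠ i in l, C * ∫ x in s \ u, φ i x ∂μ < ε / 2 := by
    have := (hφ_tail u hu_open hx₀u).const_mul C
    rw [mul_zero] at this
    exact this.eventually (gt_mem_nhds (half_pos hε))
  filter_upwards [hφ_nonneg, hφ_one, hsmall] with i hi_nonneg hi_one hi_small
  have hi_int : IntegrableOn (φ i) s μ := .of_integral_ne_zero (by simp [hi_one])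
  have hi_tail_int : IntegrableOn (uᶜ.indicator (φ i)) s μ :=
    hi_int.indicator hu_open.measurableSet.compl
  have hg_int : IntegrableOn (fun x => φ i x • g x) s μ :=
    hi_int.smul_of_top_left (memLp_top_of_bound hgm B (ae_restrict_of_forall_mem hs hgB))
  have hpointwise : ∀ x ∈ s, ‖φ i x • (g x - a)‖ ≤ ε / 2 * φ i x + C * uᶜ.indicator (φ i) x := by
    intro x hx
    rw [norm_smul, Real.norm_of_nonneg (hi_nonneg x hx)]
    by_cases hxu : x ∈ u
    · have : ‖g x - a‖ < ε / 2 := by simpa [dist_eq_norm] using hu ⟨hxu, hx⟩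
      simp only [indicator_of_notMem (notMem_compl_iff.mpr hxu), mul_zero, add_zero]
      nlinarith [hi_nonneg x hx]
    · have : ‖g x - a‖ ≤ C := (norm_sub_le _ _).trans (add_le_add_left (hgB x hx) _)
      simp only [indicator_of_mem (mem_compl hxu)]
      nlinarith [hi_nonneg x hx]
  calc dist (∫ x in s, φ i x • g x ∂μ) a = ‖∫ x in s, φ i x • (g x - a) ∂μ‖ := by
        simp_rw [dist_eq_norm, smul_sub]
        rw [integral_sub hg_int (hi_int.smul_const a), integral_smul_const, hi_one, one_smul]
    _ ≤ ∫ x in s, (ε / 2 * φ i x + C * uᶜ.indicator (φ i) x) ∂μ :=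
        norm_integral_le_of_norm_le ((hi_int.const_mul _).add (hi_tail_int.const_mul _))
          (ae_restrict_of_forall_mem hs hpointwise)
    _ = ε / 2 + C * ∫ x in s \ u, φ i x ∂μ := by
        rw [integral_add (hi_int.const_mul _) (hi_tail_int.const_mul _), integral_const_mul,
          integral_const_mul, hi_one, mul_one, setIntegral_indicator hu_open.measurableSet.compl]
        rfl
    _ < ε := by linarith

end ApproximateIdentity

theorem integral_exp_neg_div_mul_rpow_Ioi {a s : ℝ} (ha : 0 < a) (hs : 0 < s) :
    ∫ t in Ioi (0 : ℝ), exp (-a / t) * t ^ (-1 - s) = Gamma s * a ^ (-s) := by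
  rw [← integral_comp_rpow_Ioi _ (neg_ne_zero.mpr one_ne_zero)]
  have hsubst : EqOn (fun x : ℝ => (|(-1 : ℝ)| * x ^ ((-1 : ℝ) - 1)) •
      (exp (-a / x ^ (-1 : ℝ)) * (x ^ (-1 : ℝ)) ^ (-1 - s)))
      (fun x => x ^ (s - 1) * exp (-(a * x))) (Ioi 0) := by
    intro x hx
    have hx : 0 < x := hx
    simp only [rpow_neg_one, smul_eq_mul, abs_neg, abs_one, one_mul, div_inv_eq_mul,
      inv_rpow hx.le, ← rpow_neg hx.le]
    rw [mul_left_comm, ← rpow_add hx]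
    ring_nf
  rw [setIntegral_congr_fun measurableSet_Ioi hsubst, integral_rpow_mul_exp_neg_mul_Ioi hs ha,
    one_div, inv_rpow ha.le, ← rpow_neg ha.le, mul_comm]

/-- The kernel `b^{σ,y}(t)`. -/
noncomputable def extensionKernel (σ y t : ℝ) : ℝ :=
  y ^ (2 * σ) / (4 ^ σ * Gamma σ) * (exp (-y ^ 2 / (4 * t)) * t ^ (-1 - σ))

section extensionKernel

variable {σ y : ℝ}

theorem extensionKernel_nonneg (hσ : 0 < σ) (hy : 0 ≤ y) {t : ℝ} (ht : 0 < t) :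
    0 ≤ extensionKernel σ y t := by
  have := Gamma_pos_of_pos hσ
  unfold extensionKernel
  positivity

theorem setIntegral_extensionKernel (hσ : 0 < σ) (hy : 0 < y) :
    ∫ t in Ioi 0, extensionKernel σ y t = 1 := by
  have hscale : ∀ t : ℝ, -y ^ 2 / (4 * t) = -(y ^ 2 / 4) / t := fun t => by ring
  have hpow : (y ^ 2 / 4) ^ (-σ) = (y ^ (2 * σ) / 4 ^ σ)⁻¹ := by
    rw [rpow_neg (by positivity), div_rpow (by positivity) (by norm_num), ← rpow_natCast,
      ← rpow_mul hy.le, Nat.cast_ofNat]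
  have := Gamma_pos_of_pos hσ
  simp only [extensionKernel, hscale]
  rw [integral_const_mul, integral_exp_neg_div_mul_rpow_Ioi (by positivity) hσ, hpow]
  field_simp

theorem integrableOn_extensionKernel (hσ : 0 < σ) (hy : 0 < y) :
    IntegrableOn (extensionKernel σ y) (Ioi 0) :=
  .of_integral_ne_zero (by simp [setIntegral_extensionKernel hσ hy])

theorem setIntegral_extensionKernel_Ioi_le (hσ : 0 < σ) (hy : 0 < y) {δ : ℝ} (hδ : 0 < δ) :
    ∫ t in Ioi δ, extensionKernel σ y t ≤ y ^ (2 * σ) / (4 ^ σ * Gamma σ) * (δ ^ (-σ) / σ) := by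
  have := Gamma_pos_of_pos hσ
  have hbound : ∀ t ∈ Ioi δ, extensionKernel σ y t ≤
      y ^ (2 * σ) / (4 ^ σ * Gamma σ) * t ^ (-1 - σ) := by
    intro t ht
    have ht : 0 < t := hδ.trans ht
    have hexp : exp (-y ^ 2 / (4 * t)) ≤ 1 := exp_le_one_iff.mpr (by
      apply div_nonpos_of_nonpos_of_nonneg <;> nlinarith)
    unfold extensionKernel
    gcongr
    exact mul_le_of_le_one_left (by positivity) hexp
  have hrpow := integrableOn_Ioi_rpow_of_lt (a := -1 - σ) (by linarith) hδ
  calc ∫ t in Ioi δ, extensionKernel σ y t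
      ≤ ∫ t in Ioi δ, y ^ (2 * σ) / (4 ^ σ * Gamma σ) * t ^ (-1 - σ) :=
        setIntegral_mono_on ((integrableOn_extensionKernel hσ hy).mono_set (Ioi_subset_Ioi hδ.le))
          (hrpow.const_mul _) measurableSet_Ioi hbound
    _ = y ^ (2 * σ) / (4 ^ σ * Gamma σ) * (δ ^ (-σ) / σ) := by
        rw [integral_const_mul, integral_Ioi_rpow_of_lt (by linarith) hδ,
          show -1 - σ + 1 = -σ by ring, neg_div_neg_eq]

theorem tendsto_setIntegral_extensionKernel_diff (hσ : 0 < σ) {u : Set ℝ} (hu : IsOpen u)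
    (h0 : (0 : ℝ) ∈ u) :
    Tendsto (fun y => ∫ t in Ioi 0 \ u, extensionKernel σ y t) (𝓝[>] 0) (𝓝 0) := by
  obtain ⟨δ, hδ, hball⟩ := Metric.isOpen_iff.mp hu 0 h0
  have hδ2 : 0 < δ / 2 := half_pos hδ
  have htail_sub : Ioi 0 \ u ⊆ Ioi (δ / 2) := fun t ⟨ht, htu⟩ => by
    have : δ ≤ t := by simpa [abs_of_pos (mem_Ioi.mp ht)] using mt (@hball t) htu
    exact mem_Ioi.mpr (by linarith)
  have hpow : Tendsto (fun y : ℝ => y ^ (2 * σ)) (𝓝[>] 0) (𝓝 0) := by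
    have := (continuousAt_rpow_const 0 (2 * σ) (Or.inr (by positivity))).tendsto
    rw [zero_rpow (by positivity)] at this
    exact this.mono_left nhdsWithin_le_nhds
  have hupper := (hpow.div_const (4 ^ σ * Gamma σ)).mul_const ((δ / 2) ^ (-σ) / σ)
  rw [zero_div, zero_mul] at hupper
  refine tendsto_of_tendsto_of_tendsto_of_le_of_le' tendsto_const_nhds hupper ?_ ?_
  · filter_upwards [self_mem_nhdsWithin] with y hy
    exact setIntegral_nonneg (measurableSet_Ioi.diff hu.measurableSet)
      fun t ht => extensionKernel_nonneg hσ (le_of_lt hy) ht.1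
  · filter_upwards [self_mem_nhdsWithin] with y hy
    refine le_trans ?_ (setIntegral_extensionKernel_Ioi_le hσ hy hδ2)
    exact setIntegral_mono_set
      ((integrableOn_extensionKernel hσ hy).mono_set (Ioi_subset_Ioi hδ2.le))
      (ae_restrict_of_forall_mem measurableSet_Ioi
        fun t ht => extensionKernel_nonneg hσ (le_of_lt hy) (hδ2.trans ht))
      htail_sub.eventuallyLE

end extensionKernel

theorem extension_solution_bounded_and_converges_general
    {X : Type*} [NormedAddCommGroup X] [NormedSpace ℝ X] [CompleteSpace X]
    (T : ℝ → X →L[ℝ] X) (M : ℝ)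
    (hT0 : T 0 = ContinuousLinearMap.id ℝ X)
    (hTbound : ∀ t : ℝ, 0 ≤ t → ‖T t‖ ≤ M)
    (hTcont : ∀ f : X, ContinuousOn (fun t => T t f) (Ici (0:ℝ)))
    (σ : ℝ) (hσ0 : 0 < σ)
    (u : X → ℝ → X)
    (hu : ∀ (f : X) (y : ℝ), u f y =
      (y ^ (2 * σ) / (4 ^ σ * Real.Gamma σ)) •
        ∫ t in Ioi (0:ℝ), (Real.exp (-y ^ 2 / (4 * t)) * t ^ (-1 - σ)) • T t f) :
    (∃ C : ℝ, ∀ (f : X) (y : ℝ), 0 < y → ‖u f y‖ ≤ C * ‖f‖) ∧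
    ∀ f : X, Tendsto (u f) (𝓝[>] (0:ℝ)) (𝓝 f) := by
  have hu_kernel : ∀ f, u f = fun y => ∫ t in Ioi 0, extensionKernel σ y t • T t f := by
    intro f
    ext y
    simp only [hu, extensionKernel, ← integral_smul, smul_smul]
  have hTf : ∀ f, ∀ t ∈ Ioi (0 : ℝ), ‖T t f‖ ≤ M * ‖f‖ := fun f t ht =>
    (T t).le_of_opNorm_le (hTbound t (le_of_lt ht)) f
  refine ⟨⟨M, fun f y hy => ?_⟩, fun f => ?_⟩
  · rw [hu_kernel]
    exact norm_setIntegral_smul_le_of_setIntegral_eq_one measurableSet_Ioi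
      (fun t ht => extensionKernel_nonneg hσ0 hy.le ht) (setIntegral_extensionKernel hσ0 hy)
      (hTf f)
  · have hTf_cont : ContinuousOn (fun t => T t f) (Ioi 0) := (hTcont f).mono Ioi_subset_Ici_self
    have hTf_zero : Tendsto (fun t => T t f) (𝓝[>] 0) (𝓝 f) := by
      simpa [hT0] using
        ((hTcont f) 0 self_mem_Ici).mono_left (nhdsWithin_mono _ Ioi_subset_Ici_self)
    rw [hu_kernel]
    exact tendsto_setIntegral_smul_of_tendsto_setIntegral_diff measurableSet_Ioi
      (eventually_mem_nhdsWithin.mono fun y hy t ht => extensionKernel_nonneg hσ0 (le_of_lt hy) ht)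
      (eventually_mem_nhdsWithin.mono fun y hy => setIntegral_extensionKernel hσ0 hy)
      (fun _ hU h0 => tendsto_setIntegral_extensionKernel_diff hσ0 hU h0)
      (hTf_cont.aestronglyMeasurable measurableSet_Ioi) (hTf f) hTf_zero

theorem extension_solution_bounded_and_converges
    {X : Type*} [NormedAddCommGroup X] [NormedSpace ℝ X] [CompleteSpace X]
    (T : ℝ → X →L[ℝ] X) (M : ℝ)
    (hT0 : T 0 = ContinuousLinearMap.id ℝ X)
    (hTsemi : ∀ s t : ℝ, 0 ≤ s → 0 ≤ t → T (s + t) = (T s).comp (T t))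
    (hTbound : ∀ t : ℝ, 0 ≤ t → ‖T t‖ ≤ M)
    (hTcont : ∀ f : X, ContinuousOn (fun t => T t f) (Ici (0:ℝ)))
    (σ : ℝ) (hσ0 : 0 < σ) (hσ1 : σ < 1)
    (u : X → ℝ → X)
    (hu : ∀ (f : X) (y : ℝ), u f y =
      (y ^ (2 * σ) / (4 ^ σ * Real.Gamma σ)) •
        ∫ t in Ioi (0:ℝ), (Real.exp (-y ^ 2 / (4 * t)) * t ^ (-1 - σ)) • T t f) :
    (∃ C : ℝ, ∀ (f : X) (y : ℝ), 0 < y → ‖u f y‖ ≤ C * ‖f‖) ∧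
    ∀ f : X, Tendsto (u f) (𝓝[>] (0:ℝ)) (𝓝 f) :=
  extension_solution_bounded_and_converges_general T M hT0 hTbound hTcont σ hσ0 u hu
end

section
/- For every n ∈ ℕ, σ > 0 and a < 0, the n-th derivative of t ↦ e^{a/t} t^{-(σ+1)} on (0,∞) has the form (-1)^n Σ_{m=0}^n c_{m,n,σ} p_m(a/t) t^{-(σ+n+1)} e^{a/t}, where c_{m,n,σ} = C(n,m)·C(σ+n-m, n-m)·(n-m)! and p_m is a polynomial of degree m with p_0 ≡ 1 and p_m(0) = 0 for m ≥ 1. In particular, the coefficient of the term with p_0 is c_{0,n,σ} = Γ(σ+n+1)/Γ(σ+1). -/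
/-!
By Leibniz's rule the `n`-th derivative of `e^{a/t} t^{-(σ+1)}` is the sum of
`C(n,m) (e^{a/t})^{(m)} (t^{-(σ+1)})^{(n-m)}`. The power contributes
`(-1)^k (σ+1)(σ+2)⋯(σ+k) t^{-(σ+1+k)}` with `(σ+1)⋯(σ+k) = Γ(σ+k+1)/Γ(σ+1)`. Differentiating
`q(a/t) t^{-m} e^{a/t}` gives `-((X + m) q + X q')(a/t) t^{-(m+1)} e^{a/t}`, so
`(e^{a/t})^{(m)} = (-1)^m q_m(a/t) t^{-m} e^{a/t}` for the polynomials `q_m` of that recursion,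
which are monic of degree `m` and satisfy `q_{m+1}(0) = m q_m(0)`.
-/

open Real Finset Polynomial

/-- The paper's `p_m` up to the sign `(-1)^m`, which makes it monic. -/
noncomputable def expInvPoly : ℕ → ℝ[X]
  | 0 => 1
  | m + 1 => (X + C (m : ℝ)) * expInvPoly m + X * derivative (expInvPoly m)

theorem expInvPoly_zero : expInvPoly 0 = 1 := rfl

theorem expInvPoly_succ (m : ℕ) :
    expInvPoly (m + 1) = (X + C (m : ℝ)) * expInvPoly m + X * derivative (expInvPoly m) := rfl

theorem expInvPoly_monic_and_natDegree (m : ℕ) :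
    (expInvPoly m).Monic ∧ (expInvPoly m).natDegree = m := by
  induction m with
  | zero => exact ⟨monic_one, natDegree_one⟩
  | succ m ih =>
    obtain ⟨hmonic, hdeg⟩ := ih
    have hlead_deg : ((X + C (m : ℝ)) * expInvPoly m).natDegree = m + 1 := by
      rw [(monic_X_add_C _).natDegree_mul hmonic, natDegree_X_add_C, hdeg, add_comm]
    have htail : (X * derivative (expInvPoly m)).natDegree < m + 1 := by
      rcases eq_or_ne m 0 with rfl | hm
      · simp [expInvPoly_zero]
      calc (X * derivative (expInvPoly m)).natDegree
          ≤ 1 + (m - 1) := by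
            grw [natDegree_mul_le, natDegree_X, natDegree_derivative_le, hdeg]
        _ < m + 1 := by omega
    rw [← hlead_deg] at htail
    rw [expInvPoly_succ, natDegree_add_eq_left_of_natDegree_lt htail, hlead_deg]
    exact ⟨((monic_X_add_C _).mul hmonic).add_of_left (degree_lt_degree htail), rfl⟩

theorem expInvPoly_eval_zero {m : ℕ} (hm : m ≠ 0) : (expInvPoly m).eval 0 = 0 := by
  induction m with
  | zero => exact absurd rfl hm
  | succ m ih =>
    rcases eq_or_ne m 0 with rfl | hm0
    · simp [expInvPoly_succ, expInvPoly_zero]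
    · simp [expInvPoly_succ, ih hm0]

theorem Real.Gamma_add_nat_div_Gamma_eq {z : ℝ} (hz : ∀ k : ℕ, z ≠ -k) (n : ℕ) :
    Gamma (z + n) / Gamma z = (ascPochhammer ℝ n).eval z := by
  induction n with
  | zero => simp [div_self (Gamma_ne_zero hz)]
  | succ n ih =>
    have hzn : z + n ≠ 0 := fun h => hz n (by linarith)
    rw [Nat.cast_succ, ← add_assoc, Gamma_add_one hzn, mul_div_assoc, ih,
      ascPochhammer_succ_right, eval_mul, eval_add, eval_X, eval_natCast, mul_comm]

theorem iteratedDeriv_rpow_neg (r t : ℝ) (k : ℕ) :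
    iteratedDeriv k (fun s : ℝ => s ^ (-r)) t =
      (-1) ^ k * (ascPochhammer ℝ k).eval r * t ^ (-r - k) := by
  rw [iteratedDeriv_eq_iterate, iter_deriv_rpow_const, ← neg_neg r,
    ascPochhammer_eval_neg_eq_descPochhammer, neg_neg, ← mul_assoc, ← pow_add, ← two_mul, pow_mul]
  simp

theorem hasDerivAt_expInvPoly_eval_div_pow_mul_exp (a : ℝ) (m : ℕ) {t : ℝ} (ht : t ≠ 0) :
    HasDerivAt (fun s => (expInvPoly m).eval (a / s) / s ^ m * exp (a / s))
      (-((expInvPoly (m + 1)).eval (a / t) / t ^ (m + 1) * exp (a / t))) t := by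
  have hdiv : HasDerivAt (fun s => a / s) (-(a / t ^ 2)) t := by
    simpa [div_eq_mul_inv] using (hasDerivAt_inv ht).const_mul a
  have hpoly : HasDerivAt (fun s => (expInvPoly m).eval (a / s))
      ((derivative (expInvPoly m)).eval (a / t) * -(a / t ^ 2)) t :=
    ((expInvPoly m).hasDerivAt (a / t)).comp t hdiv
  have hpow : HasDerivAt (fun s => s ^ m) (m * t ^ m / t) t := by
    refine (hasDerivAt_pow m t).congr_deriv ?_
    rcases m with _ | m
    · simp
    · rw [Nat.add_sub_cancel, pow_succ, mul_div_assoc, mul_div_cancel_right₀ _ ht]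
  refine ((hpoly.div hpow (pow_ne_zero m ht)).mul hdiv.exp).congr_deriv ?_
  rw [expInvPoly_succ]
  simp only [eval_add, eval_mul, eval_X, eval_C, Pi.div_apply]
  field_simp
  ring

theorem iteratedDeriv_exp_div (a : ℝ) (m : ℕ) {t : ℝ} (ht : t ≠ 0) :
    iteratedDeriv m (fun s => exp (a / s)) t =
      (-1) ^ m * ((expInvPoly m).eval (a / t) / t ^ m * exp (a / t)) := by
  induction m generalizing t with
  | zero => simp [expInvPoly_zero]
  | succ m ih =>
    have hnear : iteratedDeriv m (fun s => exp (a / s)) =ᶠ[nhds t]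
        fun s => (-1) ^ m * ((expInvPoly m).eval (a / s) / s ^ m * exp (a / s)) :=
      Filter.eventually_of_mem (isOpen_ne.mem_nhds ht) fun s hs => ih hs
    rw [iteratedDeriv_succ, hnear.deriv_eq,
      ((hasDerivAt_expInvPoly_eval_div_pow_mul_exp a m ht).const_mul _).deriv, pow_succ]
    ring

theorem iteratedDeriv_exp_div_mul_rpow_neg (a r : ℝ) (n : ℕ) {t : ℝ} (ht : 0 < t) :
    iteratedDeriv n (fun s => exp (a / s) * s ^ (-r)) t =
      (-1) ^ n * ∑ m ∈ range (n + 1), (n.choose m * (ascPochhammer ℝ (n - m)).eval r) *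
        (expInvPoly m).eval (a / t) * t ^ (-(r + n)) * exp (a / t) := by
  have hexp : ContDiffAt ℝ n (fun s => exp (a / s)) t :=
    (contDiffAt_const.div contDiffAt_id ht.ne').exp
  rw [iteratedDeriv_fun_mul hexp (contDiffAt_rpow_const (Or.inl ht.ne')), mul_sum]
  refine sum_congr rfl fun m hm => ?_
  have hmn : m ≤ n := Nat.lt_succ_iff.mp (mem_range.mp hm)
  have hsign : (-1 : ℝ) ^ n = (-1) ^ m * (-1) ^ (n - m) := by
    rw [← pow_add, Nat.add_sub_cancel' hmn]
  have hpow : t ^ (-r - ((n - m : ℕ) : ℝ)) = t ^ (-(r + n)) * t ^ m := by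
    rw [← rpow_natCast t m, ← rpow_add ht, Nat.cast_sub hmn]
    ring_nf
  rw [iteratedDeriv_exp_div a m ht.ne', iteratedDeriv_rpow_neg, hpow, hsign]
  field_simp

theorem iteratedDeriv_exp_inv_rpow_structure :
    ∃ p : ℕ → Polynomial ℝ,
      p 0 = 1 ∧
      (∀ m : ℕ, 1 ≤ m → (p m).natDegree = m ∧ (p m).eval 0 = 0) ∧
      ∀ (n : ℕ) (σ a t : ℝ), 0 < σ → a < 0 → 0 < t →
        iteratedDeriv n (fun s : ℝ => Real.exp (a / s) * s ^ (-(σ + 1))) t =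
          (-1) ^ n *
            ∑ m ∈ Finset.range (n + 1),
              ((n.choose m : ℝ) * (Real.Gamma (σ + n - m + 1) / Real.Gamma (σ + 1))) *
                (p m).eval (a / t) * t ^ (-(σ + n + 1)) * Real.exp (a / t) := by
  refine ⟨expInvPoly, expInvPoly_zero, fun m hm =>
    ⟨(expInvPoly_monic_and_natDegree m).2, expInvPoly_eval_zero (by omega)⟩, ?_⟩
  intro n σ a t hσ _ ht
  have hσ1 : ∀ k : ℕ, σ + 1 ≠ -k := fun k h => by linarith [k.cast_nonneg (α := ℝ)]
  rw [iteratedDeriv_exp_div_mul_rpow_neg a (σ + 1) n ht]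
  congr 1
  refine sum_congr rfl fun m hm => ?_
  have hmn : m ≤ n := Nat.lt_succ_iff.mp (mem_range.mp hm)
  have hΓ : Gamma (σ + n - m + 1) / Gamma (σ + 1) = (ascPochhammer ℝ (n - m)).eval (σ + 1) := by
    rw [← Real.Gamma_add_nat_div_Gamma_eq hσ1, Nat.cast_sub hmn]
    ring_nf
  rw [hΓ, show -(σ + 1 + n) = -(σ + n + 1) by ring]
end
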